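/- Let G be a simple graph with vertex set {v_1,…,v_n} and m edges, and let t_1,…,t_n be nonnegative integers. Let G_P be the graph obtained from G by attaching, at each vertex v_i, t_i pendant paths of order r ≥ 2 (identifying v_i with an endpoint of each path). Then HM(G_P) = HM(G) + 2 Σ_{v_i v_j ∈ E(G)} (d(v_i)+d(v_j))(t_i+t_j) + Σ_{v_i v_j ∈ E(G)} (t_i+t_j)^2 + (16r−35) Σ_i t_i + Σ_i [t_i d(v_i)^2 + t_i^3 + 4t_i^2 + 2t_i^2 d(v_i) + 4 t_i d(v_i)]. -/

import Mathlib

open Finset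

variable {V : Type*}

/-- Edge set of `G` as a `Finset`, using classical decidability. -/
noncomputable def edgeFS [Fintype V] (G : SimpleGraph V) : Finset (Sym2 V) :=
  letI := Classical.decEq V
  letI : DecidableRel G.Adj := Classical.decRel _
  G.edgeFinset

/-- Degree of a vertex, using classical decidability. -/
noncomputable def deg [Fintype V] (G : SimpleGraph V) (v : V) : ℕ :=
  letI : DecidableRel G.Adj := Classical.decRel _
  G.degree v

/-- Sum over the edges of `G` of a symmetric integer-valued function of the endpoints. -/
noncomputable def edgeSum [Fintype V] (G : SimpleGraph V) (f : V → V → ℤ)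
    (hf : ∀ u v, f u v = f v u) : ℤ :=
  ∑ e ∈ edgeFS G, Sym2.lift ⟨f, hf⟩ e

/-- The hyper Zagreb index `HM(G) = Σ_{uv ∈ E(G)} (d(u)+d(v))²`. -/
noncomputable def hm [Fintype V] (G : SimpleGraph V) : ℕ :=
  ∑ e ∈ edgeFS G, Sym2.lift ⟨fun u v => (deg G u + deg G v) ^ 2,
    fun u v => by simp [add_comm]⟩ e

/-- The first Zagreb index `M₁(G) = Σ_v d(v)²`. -/
noncomputable def m1 [Fintype V] (G : SimpleGraph V) : ℕ :=
  ∑ v, (deg G v) ^ 2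


variable {V : Type*}

/-- Type-I generalized thorn graph `G_P`: attach `t v` pendant paths of order `r`
(i.e. with `r - 1` new vertices each) at each vertex `v` of `G`,
identifying `v` with an endpoint of each path. -/
def thornPath (G : SimpleGraph V) (t : V → ℕ) (r : ℕ) :
    SimpleGraph (V ⊕ ((Σ v : V, Fin (t v)) × Fin (r - 1))) where
  Adj x y :=
    match x, y with
    | Sum.inl u, Sum.inl v => G.Adj u v
    | Sum.inl u, Sum.inr (p, j) => p.1 = u ∧ j.val = 0
    | Sum.inr (p, j), Sum.inl u => p.1 = u ∧ j.val = 0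
    | Sum.inr (p, j), Sum.inr (q, j') => p = q ∧ (j.val + 1 = j'.val ∨ j'.val + 1 = j.val)
  symm := by
    constructor
    rintro (u | ⟨p, j⟩) (v | ⟨q, j'⟩) h
    · exact G.adj_symm h
    · exact h
    · exact h
    · exact ⟨h.1.symm, h.2.symm⟩
  loopless := by
    constructor
    rintro (u | ⟨p, j⟩) h
    · exact G.loopless.irrefl u h
    · omega

/-- Type-II generalized thorn graph `G_C`: attach `t v` cycles of length `r`
at each vertex `v` of `G`, identifying `v` with one vertex of each cycle. -/
def thornCycle (G : SimpleGraph V) (t : V → ℕ) (r : ℕ) :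
    SimpleGraph (V ⊕ ((Σ v : V, Fin (t v)) × Fin (r - 1))) where
  Adj x y :=
    match x, y with
    | Sum.inl u, Sum.inl v => G.Adj u v
    | Sum.inl u, Sum.inr (p, j) => p.1 = u ∧ (j.val = 0 ∨ j.val = r - 2)
    | Sum.inr (p, j), Sum.inl u => p.1 = u ∧ (j.val = 0 ∨ j.val = r - 2)
    | Sum.inr (p, j), Sum.inr (q, j') => p = q ∧ (j.val + 1 = j'.val ∨ j'.val + 1 = j.val)
  symm := by
    constructor
    rintro (u | ⟨p, j⟩) (v | ⟨q, j'⟩) h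
    · exact G.adj_symm h
    · exact h
    · exact h
    · exact ⟨h.1.symm, h.2.symm⟩
  loopless := by
    constructor
    rintro (u | ⟨p, j⟩) h
    · exact G.loopless.irrefl u h
    · omega

/-- Type-III generalized thorn graph `G_K`: attach `t v` copies of the complete graph `K_r`
at each vertex `v` of `G`, identifying `v` with one vertex of each copy. -/
def thornComplete (G : SimpleGraph V) (t : V → ℕ) (r : ℕ) :
    SimpleGraph (V ⊕ ((Σ v : V, Fin (t v)) × Fin (r - 1))) where
  Adj x y :=
    match x, y with
    | Sum.inl u, Sum.inl v => G.Adj u v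
    | Sum.inl u, Sum.inr (p, j) => p.1 = u
    | Sum.inr (p, j), Sum.inl u => p.1 = u
    | Sum.inr (p, j), Sum.inr (q, j') => p = q ∧ j ≠ j'
  symm := by
    constructor
    rintro (u | ⟨p, j⟩) (v | ⟨q, j'⟩) h
    · exact G.adj_symm h
    · exact h
    · exact h
    · exact ⟨h.1.symm, h.2.symm⟩
  loopless := by
    constructor
    rintro (u | ⟨p, j⟩) h
    · exact G.loopless.irrefl u h
    · exact h.2 rfl

/-- Type-IV generalized thorn graph `G_A`: attach `t v` copies of the complete bipartite
graph `K_{r,s}` at each vertex `v`, identifying `v` with one vertex of the part of size `r`. -/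
def thornBipartite (G : SimpleGraph V) (t : V → ℕ) (r s : ℕ) :
    SimpleGraph (V ⊕ ((Σ v : V, Fin (t v)) × (Fin (r - 1) ⊕ Fin s))) where
  Adj x y :=
    match x, y with
    | Sum.inl u, Sum.inl v => G.Adj u v
    | Sum.inl u, Sum.inr (p, x) => p.1 = u ∧ x.isRight
    | Sum.inr (p, x), Sum.inl u => p.1 = u ∧ x.isRight
    | Sum.inr (p, x), Sum.inr (q, y) => p = q ∧ x.isLeft ≠ y.isLeft
  symm := by
    constructor
    rintro (u | ⟨p, x⟩) (v | ⟨q, y⟩) h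
    · exact G.adj_symm h
    · exact h
    · exact h
    · exact ⟨h.1.symm, h.2.symm⟩
  loopless := by
    constructor
    rintro (u | ⟨p, x⟩) h
    · exact G.loopless.irrefl u h
    · exact h.2 rfl

/-- Type-V generalized thorn graph `G_{C'}`: join `t v` disjoint copies of the cycle `C_r`
to each vertex `v` of `G`, each by a new bridge edge. -/
def joinedCycle (G : SimpleGraph V) (t : V → ℕ) (r : ℕ) :
    SimpleGraph (V ⊕ ((Σ v : V, Fin (t v)) × Fin r)) where
  Adj x y :=
    match x, y with
    | Sum.inl u, Sum.inl v => G.Adj u v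
    | Sum.inl u, Sum.inr (p, j) => p.1 = u ∧ j.val = 0
    | Sum.inr (p, j), Sum.inl u => p.1 = u ∧ j.val = 0
    | Sum.inr (p, j), Sum.inr (q, j') =>
        p = q ∧ j ≠ j' ∧ ((j.val + 1) % r = j'.val ∨ (j'.val + 1) % r = j.val)
  symm := by
    constructor
    rintro (u | ⟨p, j⟩) (v | ⟨q, j'⟩) h
    · exact G.adj_symm h
    · exact h
    · exact h
    · exact ⟨h.1.symm, h.2.1.symm, h.2.2.symm⟩
  loopless := by
    constructor
    rintro (u | ⟨p, j⟩) h
    · exact G.loopless.irrefl u h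
    · exact h.2.1 rfl

/-- Type-VI generalized thorn graph `G_{K'}`: join `t v` disjoint copies of the complete
graph `K_r` to each vertex `v` of `G`, each by a new bridge edge. -/
def joinedComplete (G : SimpleGraph V) (t : V → ℕ) (r : ℕ) :
    SimpleGraph (V ⊕ ((Σ v : V, Fin (t v)) × Fin r)) where
  Adj x y :=
    match x, y with
    | Sum.inl u, Sum.inl v => G.Adj u v
    | Sum.inl u, Sum.inr (p, j) => p.1 = u ∧ j.val = 0
    | Sum.inr (p, j), Sum.inl u => p.1 = u ∧ j.val = 0
    | Sum.inr (p, j), Sum.inr (q, j') => p = q ∧ j ≠ j'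
  symm := by
    constructor
    rintro (u | ⟨p, j⟩) (v | ⟨q, j'⟩) h
    · exact G.adj_symm h
    · exact h
    · exact h
    · exact ⟨h.1.symm, h.2.symm⟩
  loopless := by
    constructor
    rintro (u | ⟨p, j⟩) h
    · exact G.loopless.irrefl u h
    · exact h.2 rfl

/-!
Count every edge from both of its ends: `2 HM(H) = Σ_x Σ_{y ∼ x} (d x + d y)²`. In `G_P` a vertex
`v` of `G` has degree `d v + t v`, and the new vertices of a thorn have degree `2`, except the
pendant end, which has degree `1`. Hence an edge `uv` of `G` contributes
`((d u + t u) + (d v + t v))²`, the edge attaching a thorn at `v` contributes `(d v + t v + 2)²`,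
and the `r - 2` edges inside a thorn contribute `16 (r - 3) + 9 = 16 r - 39`. Expanding the
squares gives the formula.
-/

namespace SimpleGraph

variable {W M : Type*} [Fintype W] [AddCommMonoid M] (H : SimpleGraph W) [DecidableRel H.Adj]

theorem sum_darts_eq_sum_sum_ite_adj (f : W → W → M) :
    ∑ d : H.Dart, f d.fst d.snd = ∑ x, ∑ y, if H.Adj x y then f x y else 0 := by
  rw [← sum_product', ← sum_filter]
  refine sum_bij' (fun d _ ↦ (d.fst, d.snd)) (fun xy h ↦ ⟨xy, (mem_filter.1 h).2⟩) ?_ ?_ ?_ ?_ ?_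
    <;> simp

theorem sum_darts_eq_two_nsmul_sum_edgeFinset [DecidableEq W] (f : W → W → M)
    (hf : ∀ u v, f u v = f v u) :
    ∑ d : H.Dart, f d.fst d.snd = 2 • ∑ e ∈ H.edgeFinset, Sym2.lift ⟨f, hf⟩ e := by
  rw [← sum_fiberwise_of_maps_to (g := Dart.edge) (t := H.edgeFinset) (by simp [Dart.edge_mem]),
    smul_sum]
  refine sum_congr rfl fun e he ↦ ?_
  induction e using Sym2.ind with
  | _ a b =>
    let d : H.Dart := ⟨(a, b), H.mem_edgeFinset.1 he⟩
    rw [show s(a, b) = d.edge from rfl, Dart.edge_fiber, sum_pair d.symm_ne.symm]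
    simp [d, Dart.edge, hf b a, two_nsmul]

end SimpleGraph

section ZagrebIndices

variable {W : Type*} [Fintype W] (H : SimpleGraph W)

theorem edgeFS_eq_edgeFinset [DecidableEq W] [DecidableRel H.Adj] : edgeFS H = H.edgeFinset := by
  ext e
  simp [edgeFS]

theorem deg_eq_sum_ite [DecidableRel H.Adj] (v : W) :
    deg H v = ∑ w, if H.Adj v w then 1 else 0 := by
  rw [deg, SimpleGraph.degree, SimpleGraph.neighborFinset_eq_filter, card_filter]
  congr!

theorem two_mul_hm [DecidableEq W] [DecidableRel H.Adj] :
    2 * (hm H : ℤ) = ∑ d : H.Dart, ((deg H d.fst : ℤ) + deg H d.snd) ^ 2 := by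
  have h : 2 * hm H = ∑ d : H.Dart, (deg H d.fst + deg H d.snd) ^ 2 := by
    rw [hm, edgeFS_eq_edgeFinset, ← smul_eq_mul]
    exact (H.sum_darts_eq_two_nsmul_sum_edgeFinset _ _).symm
  exact_mod_cast h

theorem two_mul_edgeSum [DecidableEq W] [DecidableRel H.Adj] (f : W → W → ℤ)
    (hf : ∀ u v, f u v = f v u) :
    2 * edgeSum H f hf = ∑ d : H.Dart, f d.fst d.snd := by
  rw [edgeSum, edgeFS_eq_edgeFinset, ← smul_eq_mul]
  exact (H.sum_darts_eq_two_nsmul_sum_edgeFinset f hf).symm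

noncomputable def hmRow (x : W) : ℤ :=
  letI := Classical.decRel H.Adj
  ∑ y, if H.Adj x y then ((deg H x : ℤ) + deg H y) ^ 2 else 0

theorem two_mul_hm_eq_sum_hmRow : 2 * (hm H : ℤ) = ∑ x, hmRow H x := by
  classical
  rw [two_mul_hm]
  exact H.sum_darts_eq_sum_sum_ite_adj fun x y ↦ ((deg H x : ℤ) + deg H y) ^ 2

end ZagrebIndices

theorem sum_sigma_fin_prod {α M : Type*} [Fintype α] [AddCommMonoid M] (t : α → ℕ) (n : ℕ)
    (g : α → Fin n → M) :
    ∑ b : (Σ a : α, Fin (t a)) × Fin n, g b.1.1 b.2 = ∑ a, t a • ∑ j, g a j := by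
  rw [Fintype.sum_prod_type, ← univ_sigma_univ, sum_sigma]
  simp [sum_const]

theorem sum_range_ite_adjacent {M : Type*} [AddCommMonoid M] (f : ℕ → M) {a n : ℕ}
    (ha : a < n) :
    ∑ k ∈ range n, (if a + 1 = k ∨ k + 1 = a then f k else 0) =
      (if a + 1 < n then f (a + 1) else 0) + if 0 < a then f (a - 1) else 0 := by
  have split (k : ℕ) : (if a + 1 = k ∨ k + 1 = a then f k else 0) =
      (if a + 1 = k then f k else 0) + if a - 1 = k ∧ 0 < a then f k else 0 := by
    split_ifs <;> first | omega | simp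
  rw [sum_congr rfl fun k _ ↦ split k, sum_add_distrib, sum_ite_eq]
  rcases Nat.eq_zero_or_pos a with rfl | ha₀
  · simp
  · simp [ha₀, sum_ite_eq, show a - 1 < n by omega]

theorem sum_range_sum_range_ite_adjacent {M : Type*} [AddCommMonoid M] (h : ℕ → ℕ → M) (n : ℕ) :
    ∑ j ∈ range n, ∑ k ∈ range n, (if j + 1 = k ∨ k + 1 = j then h j k else 0) =
      ∑ j ∈ range (n - 1), (h j (j + 1) + h (j + 1) j) := by
  rw [sum_congr rfl fun j hj ↦ sum_range_ite_adjacent (h j) (mem_range.1 hj), sum_add_distrib,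
    sum_add_distrib]
  rcases n with _ | n
  · simp
  congr 1
  · rw [sum_range_succ, if_neg (by omega), add_zero]
    exact sum_congr rfl fun j hj ↦ if_pos (by simpa using hj)
  · rw [sum_range_succ', if_neg (lt_irrefl 0), add_zero]
    simp

-- Thorn vertices are numbered `0, …, r - 2` from the root; `r - 2` is the pendant end.
def pathDeg (r j : ℕ) : ℕ := if j = r - 2 then 1 else 2

theorem sum_sum_ite_adjacent_sq_pathDeg {r : ℕ} (hr : 3 ≤ r) :
    ∑ j : Fin (r - 1), ∑ k : Fin (r - 1), (if (j : ℕ) + 1 = k ∨ (k : ℕ) + 1 = j then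
      ((pathDeg r j : ℤ) + pathDeg r k) ^ 2 else 0) = 2 * (16 * r - 39) := by
  rw [Fintype.sum_congr _ _ fun j : Fin (r - 1) ↦ Fin.sum_univ_eq_sum_range
      (fun k ↦ if (j : ℕ) + 1 = k ∨ k + 1 = j then ((pathDeg r j : ℤ) + pathDeg r k) ^ 2 else 0)
      (r - 1),
    Fin.sum_univ_eq_sum_range (fun j ↦ ∑ k ∈ range (r - 1),
      if j + 1 = k ∨ k + 1 = j then ((pathDeg r j : ℤ) + pathDeg r k) ^ 2 else 0) (r - 1),
    sum_range_sum_range_ite_adjacent]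
  obtain ⟨m, rfl⟩ : ∃ m, r = m + 3 := ⟨r - 3, by omega⟩
  have inner (j : ℕ) (hj : j ∈ range m) : ((pathDeg (m + 3) j : ℤ) + pathDeg (m + 3) (j + 1)) ^ 2
      + ((pathDeg (m + 3) (j + 1) : ℤ) + pathDeg (m + 3) j) ^ 2 = 32 := by
    rw [mem_range] at hj
    rw [pathDeg, pathDeg, if_neg (by omega), if_neg (by omega)]
    norm_num
  rw [show m + 3 - 1 - 1 = m + 1 by omega, sum_range_succ, sum_congr rfl inner, sum_const,
    card_range, pathDeg, pathDeg, if_neg (by omega), if_pos (by omega)]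
  push_cast
  ring

section ThornPath

variable {M : Type*} [Fintype V] [AddCommMonoid M] (G : SimpleGraph V) (t : V → ℕ) (r : ℕ)

theorem sum_ite_thornPath_adj_inl [DecidableRel G.Adj] [DecidableRel (thornPath G t r).Adj]
    (hr : 2 ≤ r) (g : V ⊕ ((Σ v : V, Fin (t v)) × Fin (r - 1)) → M) (u : V) :
    ∑ y, (if (thornPath G t r).Adj (.inl u) y then g y else 0) =
      (∑ v, if G.Adj u v then g (.inl v) else 0) +
        ∑ i : Fin (t u), g (.inr (⟨u, i⟩, ⟨0, by omega⟩)) := by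
  rw [Fintype.sum_sum_type, Fintype.sum_prod_type, ← univ_sigma_univ, sum_sigma]
  congr 1
  · exact sum_congr rfl fun v _ ↦ if_congr Iff.rfl rfl rfl
  rw [sum_eq_single u (fun v _ hvu ↦ sum_eq_zero fun i _ ↦ sum_eq_zero fun j _ ↦
    if_neg fun h ↦ hvu h.1) (by simp)]
  refine sum_congr rfl fun i _ ↦ ?_
  rw [Fintype.sum_eq_single ⟨0, by omega⟩ fun j hj ↦ if_neg fun h ↦ hj (Fin.ext h.2)]
  exact if_pos ⟨rfl, rfl⟩

theorem sum_ite_thornPath_adj_inr [DecidableRel (thornPath G t r).Adj]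
    (g : V ⊕ ((Σ v : V, Fin (t v)) × Fin (r - 1)) → M) (p : Σ v : V, Fin (t v))
    (j : Fin (r - 1)) :
    ∑ y, (if (thornPath G t r).Adj (.inr (p, j)) y then g y else 0) =
      (if (j : ℕ) = 0 then g (.inl p.1) else 0) +
        ∑ k : Fin (r - 1), if (j : ℕ) + 1 = k ∨ (k : ℕ) + 1 = j then g (.inr (p, k)) else 0 := by
  rw [Fintype.sum_sum_type, Fintype.sum_prod_type,
    Fintype.sum_eq_single p.1 fun u hu ↦ if_neg fun h ↦ hu h.1.symm,
    Fintype.sum_eq_single p fun q hq ↦ sum_eq_zero fun k _ ↦ if_neg fun h ↦ hq h.1.symm]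
  congr 1
  · by_cases hj : (j : ℕ) = 0
    · rw [if_pos ⟨rfl, hj⟩, if_pos hj]
    · rw [if_neg fun h ↦ hj h.2, if_neg hj]
  · exact sum_congr rfl fun k _ ↦ if_congr (and_iff_right rfl) rfl rfl

theorem deg_thornPath_inl (hr : 2 ≤ r) (u : V) :
    deg (thornPath G t r) (.inl u) = deg G u + t u := by
  classical
  rw [deg_eq_sum_ite, sum_ite_thornPath_adj_inl G t r hr, deg_eq_sum_ite G]
  simp

theorem deg_thornPath_inr (p : Σ v : V, Fin (t v)) (j : Fin (r - 1)) :
    deg (thornPath G t r) (.inr (p, j)) = pathDeg r j := by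
  classical
  rw [deg_eq_sum_ite, sum_ite_thornPath_adj_inr,
    Fin.sum_univ_eq_sum_range (fun k ↦ if (j : ℕ) + 1 = k ∨ k + 1 = j then 1 else 0),
    sum_range_ite_adjacent _ j.isLt, pathDeg]
  split_ifs <;> omega

theorem hmRow_thornPath_inl (hr : 3 ≤ r) [DecidableRel G.Adj] (u : V) :
    hmRow (thornPath G t r) (.inl u) =
      (∑ v, if G.Adj u v then ((deg G u + t u : ℤ) + (deg G v + t v)) ^ 2 else 0)
        + t u * (deg G u + t u + 2) ^ 2 := by
  classical
  rw [hmRow, sum_ite_thornPath_adj_inl G t r (by omega)]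
  simp [deg_thornPath_inl G t r (by omega), deg_thornPath_inr, pathDeg,
    show 0 ≠ r - 2 by omega]

theorem hmRow_thornPath_inr (hr : 3 ≤ r) (p : Σ v : V, Fin (t v)) (j : Fin (r - 1)) :
    hmRow (thornPath G t r) (.inr (p, j)) =
      (if (j : ℕ) = 0 then (deg G p.1 + t p.1 + 2 : ℤ) ^ 2 else 0) +
        ∑ k : Fin (r - 1), if (j : ℕ) + 1 = k ∨ (k : ℕ) + 1 = j then
          ((pathDeg r j : ℤ) + pathDeg r k) ^ 2 else 0 := by
  rw [hmRow, sum_ite_thornPath_adj_inr]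
  simp only [deg_thornPath_inl G t r (by omega), deg_thornPath_inr]
  congr 1
  split_ifs with hj
  · rw [pathDeg, hj, if_neg (by omega)]
    push_cast
    ring
  · rfl

theorem sum_hmRow_thornPath_inr (hr : 3 ≤ r) :
    ∑ b : (Σ v : V, Fin (t v)) × Fin (r - 1), hmRow (thornPath G t r) (.inr b) =
      ∑ v, (t v : ℤ) * ((deg G v + t v + 2) ^ 2 + 2 * (16 * r - 39)) := by
  set c : V → ℤ := fun v ↦ (deg G v + t v + 2) ^ 2
  set P : Fin (r - 1) → ℤ := fun j ↦ ∑ k : Fin (r - 1),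
    if (j : ℕ) + 1 = k ∨ (k : ℕ) + 1 = j then ((pathDeg r j : ℤ) + pathDeg r k) ^ 2 else 0
  rw [Fintype.sum_congr _ _ fun b : (Σ v, Fin (t v)) × Fin (r - 1) ↦
      hmRow_thornPath_inr G t r hr b.1 b.2,
    sum_sigma_fin_prod t (r - 1) fun v j ↦ (if (j : ℕ) = 0 then c v else 0) + P j]
  refine sum_congr rfl fun v _ ↦ ?_
  rw [sum_add_distrib, sum_sum_ite_adjacent_sq_pathDeg hr,
    Fin.sum_univ_eq_sum_range (fun j ↦ if j = 0 then c v else 0), sum_ite_eq',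
    if_pos (mem_range.2 (by omega)), nsmul_eq_mul]

theorem two_mul_hm_thornPath [DecidableEq V] [DecidableRel G.Adj] (hr : 3 ≤ r) :
    2 * (hm (thornPath G t r) : ℤ) =
      ∑ d : G.Dart, ((deg G d.fst + t d.fst : ℤ) + (deg G d.snd + t d.snd)) ^ 2
        + 2 * ∑ v, (t v : ℤ) * (deg G v + t v + 2) ^ 2
        + 2 * (16 * r - 39) * ∑ v, (t v : ℤ) := by
  rw [two_mul_hm_eq_sum_hmRow, Fintype.sum_sum_type, sum_hmRow_thornPath_inr G t r hr,
    Fintype.sum_congr _ _ fun u ↦ hmRow_thornPath_inl G t r hr u, sum_add_distrib,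
    ← G.sum_darts_eq_sum_sum_ite_adj fun u v ↦ ((deg G u + t u : ℤ) + (deg G v + t v)) ^ 2]
  simp only [mul_add, sum_add_distrib, ← sum_mul]
  ring

end ThornPath

theorem hyperZagreb_thornPath {V : Type*} [Fintype V] (G : SimpleGraph V)
    (t : V → ℕ) (r : ℕ) (hr : 3 ≤ r) :
    (hm (thornPath G t r) : ℤ) =
      hm G
      + 2 * edgeSum G (fun u v => ((deg G u : ℤ) + deg G v) * ((t u : ℤ) + t v))
      (by intro u v; ring)
      + edgeSum G (fun u v => ((t u : ℤ) + t v) ^ 2)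
      (by intro u v; ring)
      + (16 * (r : ℤ) - 35) * ∑ i : V, (t i : ℤ)
      + ∑ i : V, ((t i : ℤ) * (deg G i : ℤ) ^ 2 + (t i : ℤ) ^ 3 + 4 * (t i : ℤ) ^ 2
          + 2 * (t i : ℤ) ^ 2 * (deg G i : ℤ) + 4 * (t i : ℤ) * (deg G i : ℤ)) := by
  classical
  have edges : ∑ d : G.Dart, ((deg G d.fst + t d.fst : ℤ) + (deg G d.snd + t d.snd)) ^ 2 =
      2 * hm G + 2 * (2 * edgeSum G (fun u v => ((deg G u : ℤ) + deg G v) * ((t u : ℤ) + t v))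
        (by intro u v; ring)) + 2 * edgeSum G (fun u v => ((t u : ℤ) + t v) ^ 2)
        (by intro u v; ring) := by
    rw [two_mul_hm, two_mul_edgeSum, two_mul_edgeSum, mul_sum, ← sum_add_distrib,
      ← sum_add_distrib]
    exact sum_congr rfl fun d _ ↦ by ring
  have thorns : ∑ v, (t v : ℤ) * (deg G v + t v + 2) ^ 2 =
      ∑ i : V, ((t i : ℤ) * (deg G i : ℤ) ^ 2 + (t i : ℤ) ^ 3 + 4 * (t i : ℤ) ^ 2
          + 2 * (t i : ℤ) ^ 2 * (deg G i : ℤ) + 4 * (t i : ℤ) * (deg G i : ℤ))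
        + 4 * ∑ i : V, (t i : ℤ) := by
    rw [mul_sum, ← sum_add_distrib]
    exact sum_congr rfl fun v _ ↦ by ring
  apply mul_left_cancel₀ (two_ne_zero (α := ℤ))
  linear_combination two_mul_hm_thornPath G t r hr + edges + 2 * thorns
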